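/- arXiv:1206.5645 — 2 statements merged into one kernel-verified Lean document; each statement's English description precedes it below -/
import Mathlib

section
/- Let u > 0. If the set E_u = E + uE contains a nonempty open interval, then E_u is equal to the closure of its interior. -/
open MeasureTheory

/-- The Cantor-like set `E = {∑_{j=1}^∞ ε_j 4^{-j} : ε_j ∈ {0,1}}`. -/
def E : Set ℝ :=
  {x | ∃ ε : ℕ → ℝ, (∀ j, ε j = 0 ∨ ε j = 1) ∧ x = ∑' j : ℕ, ε j / 4 ^ (j + 1)}

/-- `E_u = E + u·E`. -/
def Eu (u : ℝ) : Set ℝ := {z | ∃ x ∈ E, ∃ y ∈ E, z = x + u * y}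

/-!
Writing each of `x, y ∈ E` as `(c + x') / 4` with a leading digit `c ∈ {0, 1}` shows that every
point of `E_u` lies in a copy `a / 4 + E_u / 4 ⊆ E_u` with `a ∈ {0, 1, u, 1 + u}`; iterating, every
point lies in copies `p + 4⁻ⁿ E_u ⊆ E_u` of arbitrarily small diameter. Each of them carries a
rescaled copy of the interior of `E_u`, which is nonempty by hypothesis, so interior points of
`E_u` accumulate at every point of `E_u`. Since `E_u` is compact, hence closed, the theorem follows.
-/

open Set Metric
open scoped Pointwise

section Copies

variable {𝕜 V : Type*}

section Algebraic

variable [Monoid 𝕜] [AddMonoid V] [DistribMulAction 𝕜 V]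

def IsCoveredByCopies (K : Set V) (r : 𝕜) : Prop :=
  ∀ z ∈ K, ∃ p : V, z ∈ (fun x => p + r • x) '' K ∧ (fun x => p + r • x) '' K ⊆ K

theorem isCoveredByCopies_one (K : Set V) : IsCoveredByCopies K (1 : 𝕜) :=
  fun z hz => ⟨0, ⟨z, hz, by simp⟩, by simp⟩

theorem IsCoveredByCopies.mul {K : Set V} {r s : 𝕜} (hr : IsCoveredByCopies K r)
    (hs : IsCoveredByCopies K s) : IsCoveredByCopies K (r * s) := by
  intro z hz
  obtain ⟨p, ⟨w, hw, rfl⟩, hpK⟩ := hr z hz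
  obtain ⟨q, ⟨t, ht, rfl⟩, hqK⟩ := hs w hw
  have hcomp : ∀ x : V, p + r • (q + s • x) = (p + r • q) + (r * s) • x := fun x => by
    rw [smul_add, mul_smul, add_assoc]
  refine ⟨p + r • q, ⟨t, ht, (hcomp t).symm⟩, ?_⟩
  rintro _ ⟨x, hx, rfl⟩
  simpa only [hcomp] using hpK (mem_image_of_mem _ (hqK (mem_image_of_mem _ hx)))

theorem IsCoveredByCopies.pow {K : Set V} {r : 𝕜} (hr : IsCoveredByCopies K r) (n : ℕ) :
    IsCoveredByCopies K (r ^ n) := by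
  induction n with
  | zero => simpa using isCoveredByCopies_one K
  | succ n ih => rw [pow_succ]; exact ih.mul hr

end Algebraic

variable [NontriviallyNormedField 𝕜] [NormedAddCommGroup V] [NormedSpace 𝕜 V]

theorem IsCoveredByCopies.subset_closure_interior {K : Set V} {r : 𝕜}
    (hr : IsCoveredByCopies K r) (hr0 : r ≠ 0) (hr1 : ‖r‖ < 1) (hK : Bornology.IsBounded K)
    (hint : (interior K).Nonempty) : K ⊆ closure (interior K) := by
  obtain ⟨m, hm⟩ := hint
  intro z hz
  rw [Metric.mem_closure_iff]
  intro ε hε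
  have hD : 0 < diam K + 1 := by positivity
  obtain ⟨n, hn⟩ := exists_pow_lt_of_lt_one (div_pos hε hD) hr1
  obtain ⟨p, ⟨t, ht, rfl⟩, hcopy⟩ := hr.pow n z hz
  have hf : IsOpenMap fun x : V => p + r ^ n • x :=
    (isOpenMap_add_left p).comp (isOpenMap_smul₀ (pow_ne_zero n hr0))
  refine ⟨p + r ^ n • m, interior_maximal ((image_mono interior_subset).trans hcopy)
    (hf _ isOpen_interior) (mem_image_of_mem _ hm), ?_⟩
  calc dist (p + r ^ n • t) (p + r ^ n • m) = ‖r‖ ^ n * dist t m := by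
        rw [dist_add_left, dist_smul₀, norm_pow]
    _ ≤ ‖r‖ ^ n * (diam K + 1) := by
        gcongr
        linarith [dist_le_diam_of_mem hK ht (interior_subset hm)]
    _ < ε := (lt_div_iff₀ hD).mp hn

end Copies

theorem norm_digit_div_le {c : ℝ} (hc : c ∈ ({0, 1} : Set ℝ)) (j : ℕ) :
    ‖c / 4 ^ (j + 1)‖ ≤ (1 / 4) ^ j := by
  rcases hc with rfl | rfl
  · simp
  · rw [norm_div, norm_one, norm_pow, Real.norm_ofNat, one_div_pow,
      div_le_div_iff_of_pos_left one_pos (by positivity) (by positivity)]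
    exact pow_le_pow_right₀ (by norm_num) (Nat.le_succ j)

theorem summable_digits {ε : ℕ → ℝ} (hε : ∀ j, ε j ∈ ({0, 1} : Set ℝ)) :
    Summable fun j => ε j / 4 ^ (j + 1) :=
  .of_norm_bounded (summable_geometric_of_lt_one (by norm_num) (by norm_num))
    fun j => norm_digit_div_le (hε j) j

theorem tsum_digits_eq {ε : ℕ → ℝ} (hε : ∀ j, ε j ∈ ({0, 1} : Set ℝ)) :
    ∑' j, ε j / 4 ^ (j + 1) = (ε 0 + ∑' j, ε (j + 1) / 4 ^ (j + 1)) / 4 := by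
  have hshift : ∀ j, ε (j + 1) / 4 ^ (j + 1 + 1) = ε (j + 1) / 4 ^ (j + 1) / 4 := fun j => by
    rw [pow_succ, div_div]
  rw [(summable_digits hε).tsum_eq_zero_add]
  simp only [hshift, tsum_div_const]
  ring

theorem mem_E_iff {x : ℝ} : x ∈ E ↔ ∃ c ∈ ({0, 1} : Set ℝ), ∃ y ∈ E, x = (c + y) / 4 := by
  constructor
  · rintro ⟨ε, hε, rfl⟩
    exact ⟨ε 0, hε 0, _, ⟨fun j => ε (j + 1), fun j => hε (j + 1), rfl⟩, tsum_digits_eq hε⟩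
  · rintro ⟨c, hc, _, ⟨ε, hε, rfl⟩, rfl⟩
    -- the digit sequence `c, ε 0, ε 1, …`
    let ε' : ℕ → ℝ := fun j => Nat.rec c (fun i _ => ε i) j
    have hε' : ∀ j, ε' j ∈ ({0, 1} : Set ℝ) := fun j => by cases j <;> simp_all [ε']
    exact ⟨ε', hε', (tsum_digits_eq hε').symm⟩

theorem isCompact_E : IsCompact E := by
  have hE : E = (fun ε : ℕ → ℝ => ∑' j, ε j / 4 ^ (j + 1)) '' univ.pi fun _ => {0, 1} := by
    ext x
    constructor
    · rintro ⟨ε, hε, rfl⟩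
      exact ⟨ε, fun j _ => hε j, rfl⟩
    · rintro ⟨ε, hε, rfl⟩
      exact ⟨ε, fun j => hε j (mem_univ j), rfl⟩
  rw [hE]
  exact (isCompact_univ_pi fun _ => (toFinite _).isCompact).image_of_continuousOn
    (continuousOn_tsum (fun j => ((continuous_apply j).div_const _).continuousOn)
      (summable_geometric_of_lt_one (by norm_num) (by norm_num))
      fun j _ hε => norm_digit_div_le (hε j (mem_univ j)) j)

theorem Eu_eq_add_smul (u : ℝ) : Eu u = E + u • E := by
  ext z
  simp only [Eu, mem_ofPred_eq, Set.mem_add, Set.mem_smul_set, smul_eq_mul]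
  constructor
  · rintro ⟨x, hx, y, hy, rfl⟩
    exact ⟨x, hx, u * y, ⟨y, hy, rfl⟩, rfl⟩
  · rintro ⟨x, hx, _, ⟨y, hy, rfl⟩, rfl⟩
    exact ⟨x, hx, y, hy, rfl⟩

theorem isCompact_Eu (u : ℝ) : IsCompact (Eu u) :=
  Eu_eq_add_smul u ▸ isCompact_E.add (isCompact_E.smul u)

theorem isCoveredByCopies_Eu (u : ℝ) : IsCoveredByCopies (Eu u) (4⁻¹ : ℝ) := by
  rintro _ ⟨x, hx, y, hy, rfl⟩
  obtain ⟨c, hc, x', hx', rfl⟩ := mem_E_iff.mp hx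
  obtain ⟨d, hd, y', hy', rfl⟩ := mem_E_iff.mp hy
  refine ⟨(c + u * d) / 4,
    ⟨x' + u * y', ⟨x', hx', y', hy', rfl⟩, by simp only [smul_eq_mul]; ring⟩, ?_⟩
  rintro _ ⟨_, ⟨x, hx, y, hy, rfl⟩, rfl⟩
  exact ⟨(c + x) / 4, mem_E_iff.mpr ⟨c, hc, x, hx, rfl⟩,
    (d + y) / 4, mem_E_iff.mpr ⟨d, hd, y, hy, rfl⟩, by simp only [smul_eq_mul]; ring⟩

theorem Eu_eq_closure_interior_of_contains_interval_general (u : ℝ)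
    (h : ∃ a b : ℝ, a < b ∧ Set.Ioo a b ⊆ Eu u) :
    Eu u = closure (interior (Eu u)) := by
  obtain ⟨a, b, hab, hsub⟩ := h
  have hint : (interior (Eu u)).Nonempty :=
    (nonempty_Ioo.mpr hab).mono (interior_maximal hsub isOpen_Ioo)
  refine subset_antisymm ?_ ((closure_mono interior_subset).trans
    (isCompact_Eu u).isClosed.closure_subset)
  exact (isCoveredByCopies_Eu u).subset_closure_interior (by norm_num) (by norm_num)
    (isCompact_Eu u).isBounded hint

/-- Lemma 2: if `E_u` contains a nonempty open interval, then `E_u` is the closure of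
its interior. -/
theorem Eu_eq_closure_interior_of_contains_interval (u : ℝ) (hu : 0 < u)
    (h : ∃ a b : ℝ, a < b ∧ Set.Ioo a b ⊆ Eu u) :
    Eu u = closure (interior (Eu u)) :=
  Eu_eq_closure_interior_of_contains_interval_general u h
end

section
/- The set of differences 2E − E = {2y − x : x ∈ E, y ∈ E} is exactly the closed interval [−1/3, 2/3]. Consequently, the segments joining a point of E on the line y = 0 to a point of 2E + i on the line y = 1 realize every slope of segments joining the intervals [0, 1/3] and [i, 2/3 + i]. -/
/-!
Write `x = ∑ ε_j 4^{-(j+1)}` and `y = ∑ δ_j 4^{-(j+1)}` with binary digits. Since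
`1/3 = ∑ 4^{-(j+1)}`, we get `2y - x + 1/3 = ∑ (2δ_j - ε_j + 1) 4^{-(j+1)}`, and `2δ - ε + 1`
runs exactly through the base-4 digits `0, 1, 2, 3` as `δ, ε` run through `{0, 1}`. Hence
`2E - E + 1/3` is the set of all base-4 expansions, which is `[0, 1]`.
-/

open MeasureTheory

lemma hasSum_one_div_four_pow_succ : HasSum (fun j : ℕ => (1 : ℝ) / 4 ^ (j + 1)) (1 / 3) := by
  have hterm : (fun j : ℕ => (1 : ℝ) / 4 ^ (j + 1)) = fun j => 1 / 4 * (1 / 4) ^ j := by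
    ext j
    rw [pow_succ', one_div_pow, one_div_mul_one_div]
  rw [hterm, show (1 / 3 : ℝ) = 1 / 4 * (1 - 1 / 4)⁻¹ by norm_num]
  exact (hasSum_geometric_of_lt_one (by norm_num) (by norm_num)).mul_left _

lemma summable_bit_div_four_pow {ε : ℕ → ℝ} (hε : ∀ j, ε j = 0 ∨ ε j = 1) :
    Summable fun j => ε j / 4 ^ (j + 1) := by
  refine hasSum_one_div_four_pow_succ.summable.of_nonneg_of_le (fun j => ?_) (fun j => ?_) <;>
    rcases hε j with h | h <;> simp [h]

lemma E_subset_Icc : E ⊆ Set.Icc 0 (1 / 3) := by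
  rintro _ ⟨ε, hε, rfl⟩
  have hε01 : ∀ j, 0 ≤ ε j ∧ ε j ≤ 1 := fun j => by rcases hε j with h | h <;> simp [h]
  refine ⟨tsum_nonneg fun j => div_nonneg (hε01 j).1 (by positivity), ?_⟩
  refine hasSum_le (fun j => ?_) (summable_bit_div_four_pow hε).hasSum hasSum_one_div_four_pow_succ
  exact div_le_div_of_nonneg_right (hε01 j).2 (by positivity)

lemma exists_bits_eq_fin_four (d : Fin 4) :
    ∃ δ ε : ℝ, (δ = 0 ∨ δ = 1) ∧ (ε = 0 ∨ ε = 1) ∧ (d : ℝ) = 2 * δ - ε + 1 := by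
  fin_cases d
  · exact ⟨0, 1, by norm_num⟩
  · exact ⟨0, 0, by norm_num⟩
  · exact ⟨1, 1, by norm_num⟩
  · exact ⟨1, 0, by norm_num⟩

lemma two_mul_E_sub_E_subset_Icc :
    {z : ℝ | ∃ x ∈ E, ∃ y ∈ E, z = 2 * y - x} ⊆ Set.Icc (-(1 : ℝ) / 3) (2 / 3) := by
  rintro _ ⟨x, hx, y, hy, rfl⟩
  have hx' := E_subset_Icc hx
  have hy' := E_subset_Icc hy
  exact ⟨by linarith [hx'.2, hy'.1], by linarith [hx'.1, hy'.2]⟩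

lemma Icc_subset_two_mul_E_sub_E :
    Set.Icc (-(1 : ℝ) / 3) (2 / 3) ⊆ {z | ∃ x ∈ E, ∃ y ∈ E, z = 2 * y - x} := by
  intro z hz
  obtain ⟨d, -, hd⟩ := Real.ofDigits_SurjOn (b := 4) (by norm_num)
    (show z + 1 / 3 ∈ Set.Icc (0 : ℝ) 1 from ⟨by linarith [hz.1], by linarith [hz.2]⟩)
  choose δ ε hδ hε hdigit using exists_bits_eq_fin_four
  have hδs := summable_bit_div_four_pow (fun j => hδ (d j))
  have hεs := summable_bit_div_four_pow (fun j => hε (d j))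
  refine ⟨_, ⟨_, fun j => hε (d j), rfl⟩, _, ⟨_, fun j => hδ (d j), rfl⟩, ?_⟩
  have hofDigits : HasSum (fun j => (d j : ℝ) / 4 ^ (j + 1)) (z + 1 / 3) := by
    have hterm : (fun j => (d j : ℝ) / 4 ^ (j + 1)) = Real.ofDigitsTerm d := by
      ext j
      simp [Real.ofDigitsTerm, div_eq_mul_inv]
    rw [hterm, ← hd]
    exact Real.summable_ofDigitsTerm.hasSum
  have hdigits := hofDigits.sub hasSum_one_div_four_pow_succ
  simp only [← sub_div, hdigit, add_sub_cancel_right] at hdigits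
  have hbits := (hδs.hasSum.mul_left 2).sub hεs.hasSum
  simp only [← mul_div_assoc, ← sub_div] at hbits
  exact hdigits.unique hbits

/-- `2E − E = [−1/3, 2/3]`; consequently every segment joining a point `a` of `[0,1/3]`
(on the line `y = 0`) to a point `b + i` of `[i, 2/3 + i]` (on the line `y = 1`) is
parallel to a segment joining a point `x` of `E` to a point `2y + i` of `2E + i`. -/
theorem twoE_sub_E_eq_Icc :
    {z : ℝ | ∃ x ∈ E, ∃ y ∈ E, z = 2 * y - x} = Set.Icc (-(1 : ℝ) / 3) (2 / 3) ∧
      ∀ a ∈ Set.Icc (0 : ℝ) (1 / 3), ∀ b ∈ Set.Icc (0 : ℝ) (2 / 3),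
        ∃ x ∈ E, ∃ y ∈ E,
          ((2 * y + Complex.I) - x : ℂ) = (b + Complex.I) - a := by
  have hdiff : {z : ℝ | ∃ x ∈ E, ∃ y ∈ E, z = 2 * y - x} = Set.Icc (-(1 : ℝ) / 3) (2 / 3) :=
    two_mul_E_sub_E_subset_Icc.antisymm Icc_subset_two_mul_E_sub_E
  refine ⟨hdiff, fun a ha b hb => ?_⟩
  have hba : b - a ∈ Set.Icc (-(1 : ℝ) / 3) (2 / 3) :=
    ⟨by linarith [ha.2, hb.1], by linarith [ha.1, hb.2]⟩
  obtain ⟨x, hx, y, hy, hxy⟩ := hdiff ▸ hba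
  refine ⟨x, hx, y, hy, ?_⟩
  have hxyC : (b : ℂ) - a = 2 * y - x := by exact_mod_cast hxy
  linear_combination -hxyC
end
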